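/- lim_{α→∞} √α · ∫_{ℝ} |sin t / t|^α dt = √(6π). -/

import Mathlib

/-!
Substituting `t = s / √α`, the quantity becomes `∫ |sinc (s / √α)| ^ α ds`. The Taylor bounds
`1 - t²/6 ≤ sinc t ≤ 1 - t²/6 + t⁴/100` squeeze the integrand between `(1 - s²/(6α)) ^ α` and
`exp (-s²/6 + s⁴/(100 α))`, so it tends to `exp (-s²/6)`. For `α ≥ 4` it is dominated by a
Gaussian where `|t| ≤ π` and by `2 / (1 + s²)` where `|t| > π`, using `|sinc t| ≤ 1/|t|`.
Dominated convergence and `∫ exp (-s²/6) = √(6π)` conclude.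
-/

open Real MeasureTheory Filter Topology

namespace Real

variable {x : ℝ}

lemma sinc_abs (x : ℝ) : sinc |x| = sinc x := by
  rcases abs_choice x with h | h <;> simp [h]

lemma sinc_nonneg_of_abs_le_pi (hx : |x| ≤ π) : 0 ≤ sinc x := by
  rcases eq_or_ne x 0 with rfl | hx0
  · simp
  · have h : 0 < |x| := abs_pos.2 hx0
    rw [← sinc_abs, sinc_of_ne_zero h.ne']
    exact div_nonneg (sin_nonneg_of_nonneg_of_le_pi h.le hx) h.le

lemma one_sub_sq_div_six_le_sinc (x : ℝ) : 1 - x ^ 2 / 6 ≤ sinc x := by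
  rcases eq_or_ne x 0 with rfl | hx0
  · simp
  · have h : 0 < |x| := abs_pos.2 hx0
    rw [← sinc_abs, ← sq_abs x, sinc_of_ne_zero h.ne', le_div_iff₀ h]
    linarith [sin_ge_sub_cube h.le]

lemma sinc_le_one_sub_sq_div_six_add (hx : |x| ≤ 1) :
    sinc x ≤ 1 - x ^ 2 / 6 + x ^ 4 / 100 := by
  rcases eq_or_ne x 0 with rfl | hx0
  · simp
  · have h : 0 < |x| := abs_pos.2 hx0
    rw [← sinc_abs, ← sq_abs x, ← (by decide : Even 4).pow_abs x]
    have hsin := (abs_le.1 (sin_bound (x := |x|) (by rwa [abs_abs]))).2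
    rw [abs_abs] at hsin
    rw [sinc_of_ne_zero h.ne', div_le_iff₀ h]
    linarith

lemma abs_sinc_le_exp (hx : |x| ≤ 1) : |sinc x| ≤ exp ((-(1 / 6) + x ^ 2 / 100) * x ^ 2) := by
  rw [abs_of_nonneg (sinc_nonneg_of_abs_le_pi (hx.trans (by linarith [pi_gt_three])))]
  calc sinc x ≤ (-(1 / 6) + x ^ 2 / 100) * x ^ 2 + 1 := by
        linarith [sinc_le_one_sub_sq_div_six_add hx]
    _ ≤ _ := add_one_le_exp _

-- `sin x = 2 sin (x/2) cos (x/2) ≤ x cos (x/2)` and `cos (x/2) ≤ 1 - x²/(2π²)`.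
lemma sinc_le_exp_neg_mul_sq (hx : |x| ≤ π) : sinc x ≤ exp (-(2 * π ^ 2)⁻¹ * x ^ 2) := by
  rcases eq_or_ne x 0 with rfl | hx0
  · simp
  have h : 0 < |x| := abs_pos.2 hx0
  rw [← sinc_abs, ← sq_abs x]
  set y := |x|
  have hcos : cos (y / 2) ≤ 1 - (2 * π ^ 2)⁻¹ * y ^ 2 := by
    have hy : |y / 2| ≤ π := by rw [abs_of_pos (by positivity)]; linarith [pi_pos]
    convert cos_le_one_sub_mul_cos_sq hy using 2
    field_simp
  have hcos_nonneg : 0 ≤ cos (y / 2) := cos_nonneg_of_mem_Icc ⟨by linarith [pi_pos], by linarith⟩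
  have hsin : sin y ≤ y * cos (y / 2) := by
    calc sin y = 2 * sin (y / 2) * cos (y / 2) := by rw [← sin_two_mul]; ring_nf
      _ ≤ 2 * (y / 2) * cos (y / 2) := by gcongr; exact sin_le (by positivity)
      _ = y * cos (y / 2) := by ring
  rw [sinc_of_ne_zero h.ne', div_le_iff₀ h]
  calc sin y ≤ y * cos (y / 2) := hsin
    _ ≤ y * (1 - (2 * π ^ 2)⁻¹ * y ^ 2) := by gcongr
    _ ≤ y * exp (-(2 * π ^ 2)⁻¹ * y ^ 2) := by
        gcongr
        linarith [add_one_le_exp (-(2 * π ^ 2)⁻¹ * y ^ 2)]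
    _ = _ := mul_comm _ _

lemma abs_sinc_le_inv_abs (h : x ≠ 0) : |sinc x| ≤ |x|⁻¹ := by
  rw [sinc_of_ne_zero h, abs_div, div_le_iff₀ (abs_pos.2 h), inv_mul_cancel₀ (abs_pos.2 h).ne']
  exact abs_sin_le_one x

end Real

section

variable {α : ℝ}

lemma exp_mul_sq_div_sqrt_rpow (c s : ℝ) (hα : 0 < α) :
    exp (c * (s / √α) ^ 2) ^ α = exp (c * s ^ 2) := by
  rw [← exp_mul, div_pow, sq_sqrt hα.le]
  field_simp

lemma le_pi_rpow_sub_two (hα : 4 ≤ α) : α ≤ π ^ (α - 2) := by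
  have hexp : α ≤ exp (α - 2) := by
    have h := add_one_le_exp ((α - 2) / 2)
    rw [show α - 2 = (α - 2) / 2 + (α - 2) / 2 by ring, exp_add]
    nlinarith
  calc α ≤ exp 1 ^ (α - 2) := by rwa [exp_one_rpow]
    _ ≤ π ^ (α - 2) :=
        rpow_le_rpow (exp_pos 1).le (exp_one_lt_three.trans pi_gt_three).le (by linarith)

lemma tendsto_const_div_sqrt_atTop_nhds_zero (s : ℝ) :
    Tendsto (fun α : ℝ => s / √α) atTop (𝓝 0) :=
  tendsto_const_nhds.div_atTop tendsto_sqrt_atTop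

lemma tendsto_abs_sinc_div_sqrt_rpow (s : ℝ) :
    Tendsto (fun α : ℝ => |sinc (s / √α)| ^ α) atTop (𝓝 (exp (-(1 / 6) * s ^ 2))) := by
  have hsmall : ∀ᶠ α : ℝ in atTop, |s / √α| < 1 := by
    have := (tendsto_const_div_sqrt_atTop_nhds_zero s).abs
    rw [abs_zero] at this
    exact this.eventually_lt_const one_pos
  have hlower : Tendsto (fun α : ℝ => (1 + -(1 / 6) * s ^ 2 / α) ^ α) atTop
      (𝓝 (exp (-(1 / 6) * s ^ 2))) := tendsto_one_add_div_rpow_exp _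
  have hupper : Tendsto (fun α : ℝ => exp ((-(1 / 6) + (s / √α) ^ 2 / 100) * s ^ 2)) atTop
      (𝓝 (exp (-(1 / 6) * s ^ 2))) := by
    have := ((tendsto_const_div_sqrt_atTop_nhds_zero s).pow 2).div_const 100
      |>.const_add (-(1 / 6)) |>.mul_const (s ^ 2) |>.rexp
    simpa using this
  refine tendsto_of_tendsto_of_tendsto_of_le_of_le' hlower hupper ?_ ?_
  · filter_upwards [hsmall, eventually_gt_atTop 0] with α hs hα
    have hbase : 1 + -(1 / 6) * s ^ 2 / α = 1 - (s / √α) ^ 2 / 6 := by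
      rw [div_pow, sq_sqrt hα.le]; ring
    rw [hbase]
    refine rpow_le_rpow ?_ ((one_sub_sq_div_six_le_sinc _).trans (le_abs_self _)) hα.le
    nlinarith [sq_abs (s / √α), abs_nonneg (s / √α)]
  · filter_upwards [hsmall, eventually_gt_atTop 0] with α hs hα
    rw [← exp_mul_sq_div_sqrt_rpow _ s hα]
    exact rpow_le_rpow (abs_nonneg _) (abs_sinc_le_exp hs.le) hα.le

lemma abs_sinc_div_sqrt_rpow_le_of_abs_le_pi {s : ℝ} (hα : 0 < α) (hs : |s / √α| ≤ π) :
    |sinc (s / √α)| ^ α ≤ exp (-(2 * π ^ 2)⁻¹ * s ^ 2) := by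
  rw [← exp_mul_sq_div_sqrt_rpow _ s hα, abs_of_nonneg (sinc_nonneg_of_abs_le_pi hs)]
  exact rpow_le_rpow (sinc_nonneg_of_abs_le_pi hs) (sinc_le_exp_neg_mul_sq hs) hα.le

-- With `t = s / √α`: `|t| ^ α = |t| ^ 2 |t| ^ (α - 2) ≥ (s ^ 2 / α) π ^ (α - 2) ≥ s ^ 2`.
lemma abs_sinc_div_sqrt_rpow_le_of_pi_lt {s : ℝ} (hα : 4 ≤ α) (hs : π < |s / √α|) :
    |sinc (s / √α)| ^ α ≤ 2 * (1 + s ^ 2)⁻¹ := by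
  set t := s / √α
  have hα0 : 0 < α := by linarith
  have ht : 0 < |t| := pi_pos.trans hs
  have ht_sq : |t| ^ (2 : ℝ) = s ^ 2 / α := by
    rw [rpow_two, sq_abs, div_pow, sq_sqrt hα0.le]
  have hs_sq : s ^ 2 ≤ |t| ^ α := by
    calc s ^ 2 = s ^ 2 / α * α := by field_simp
      _ ≤ |t| ^ (2 : ℝ) * π ^ (α - 2) := by
          rw [ht_sq]; gcongr; exact le_pi_rpow_sub_two hα
      _ ≤ |t| ^ (2 : ℝ) * |t| ^ (α - 2) := by
          gcongr; linarith
      _ = |t| ^ α := by rw [← rpow_add ht]; ring_nf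
  have hs_one : 1 ≤ s ^ 2 := by
    have : π ^ 2 ≤ s ^ 2 / α := by rw [← ht_sq, rpow_two]; gcongr
    have := (le_div_iff₀ hα0).1 this
    nlinarith [pi_gt_three]
  calc |sinc t| ^ α ≤ (|t|⁻¹) ^ α :=
        rpow_le_rpow (abs_nonneg _) (abs_sinc_le_inv_abs (abs_pos.1 ht)) hα0.le
    _ = (|t| ^ α)⁻¹ := inv_rpow (abs_nonneg _) α
    _ ≤ (s ^ 2)⁻¹ := inv_anti₀ (by positivity) hs_sq
    _ ≤ 2 * (1 + s ^ 2)⁻¹ := by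
        rw [← div_eq_mul_inv, ← one_div, div_le_div_iff₀ (by positivity) (by positivity)]
        linarith

lemma abs_sinc_div_sqrt_rpow_le (hα : 4 ≤ α) (s : ℝ) :
    |sinc (s / √α)| ^ α ≤ exp (-(2 * π ^ 2)⁻¹ * s ^ 2) + 2 * (1 + s ^ 2)⁻¹ := by
  rcases le_or_gt |s / √α| π with hs | hs
  · exact (abs_sinc_div_sqrt_rpow_le_of_abs_le_pi (by linarith) hs).trans
      (le_add_of_nonneg_right (by positivity))
  · exact (abs_sinc_div_sqrt_rpow_le_of_pi_lt hα hs).trans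
      (le_add_of_nonneg_left (by positivity))

lemma tendsto_integral_abs_sinc_div_sqrt_rpow :
    Tendsto (fun α : ℝ => ∫ s, |sinc (s / √α)| ^ α) atTop (𝓝 √(6 * π)) := by
  have hgauss : ∫ s : ℝ, exp (-(1 / 6) * s ^ 2) = √(6 * π) := by
    rw [integral_gaussian]; ring_nf
  rw [← hgauss]
  refine tendsto_integral_filter_of_dominated_convergence
    (fun s => exp (-(2 * π ^ 2)⁻¹ * s ^ 2) + 2 * (1 + s ^ 2)⁻¹) ?_ ?_ ?_
    (.of_forall tendsto_abs_sinc_div_sqrt_rpow)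
  · exact .of_forall fun α =>
      ((continuous_sinc.comp (continuous_id.div_const _)).abs.measurable.pow_const α)
        |>.aestronglyMeasurable
  · filter_upwards [eventually_ge_atTop 4] with α hα
    refine .of_forall fun s => ?_
    rw [norm_of_nonneg (rpow_nonneg (abs_nonneg _) _)]
    exact abs_sinc_div_sqrt_rpow_le hα s
  · exact (integrable_exp_neg_mul_sq (by positivity)).add
      (integrable_inv_one_add_sq.const_mul 2)

end

theorem ball_asymptotic :
    Tendsto (fun α : ℝ =>
        Real.sqrt α * ∫ t : ℝ, (if t = 0 then (1:ℝ) else |Real.sin t / t|) ^ α)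
      atTop (nhds (Real.sqrt (6 * Real.pi))) := by
  refine tendsto_integral_abs_sinc_div_sqrt_rpow.congr' ?_
  filter_upwards [eventually_gt_atTop 0] with α hα
  rw [Measure.integral_comp_div (fun t => |sinc t| ^ α), smul_eq_mul,
    abs_of_pos (sqrt_pos.2 hα)]
  congr 1
  refine integral_congr_ae (.of_forall fun t => ?_)
  rcases eq_or_ne t 0 with rfl | ht
  · simp
  · simp [sinc_of_ne_zero ht, ht]
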